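/- The words appearing in the solution structure satisfy the identity: d·ℓ_d(fw·c^{i_1}f·x_1 β_{i_1}·c^{i_2}f·x_2 β_{i_2} ⋯ c^{i_k}f·x_k β_{i_k})·dd = dd·r_d(f α_{i_1} x_1 c^{i_1} f α_{i_2} x_2 c^{i_2} ⋯ f α_{i_k} x_k c^{i_k} f u)·d, whenever w = α_{i_1} x_1, x_j β_{i_j} = α_{i_{j+1}} x_{j+1} for 1 ≤ j < k, and x_k β_{i_k} = u. -/

import Mathlib

/-- The alphabet `{a, b, c, f, d}`: `a, b` are the letters of the normal
system, and `c`, `f`, `d` are new marker letters. -/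
inductive Γ | a | b | c | f | d
deriving DecidableEq

/-- `x` is one of the normal-system letters `a, b`. -/
def isAB (x : Γ) : Prop := x = Γ.a ∨ x = Γ.b

/-- The left desynchronization map `ℓ_d`: insert `d` before every letter. -/
def ld (v : List Γ) : List Γ := v.flatMap (fun x => [Γ.d, x])

/-- The right desynchronization map `r_d`: insert `d` after every letter. -/
def rd (v : List Γ) : List Γ := v.flatMap (fun x => [x, Γ.d])

/-- One derivation step of the normal system with rule set `P`:
`u → v` iff there is a rule `α X ↦ X β` in `P` (the pair `(α, β)`) and a
word `x` with `u = α x` and `v = x β`. -/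
def Step (P : List (List Γ × List Γ)) (u v : List Γ) : Prop :=
  ∃ p ∈ P, ∃ x : List Γ, u = p.1 ++ x ∧ v = x ++ p.2

/-- The rules `P` of a normal system over `{a, b}` with all rule words
nonempty. -/
def GoodRules (P : List (List Γ × List Γ)) : Prop :=
  ∀ p ∈ P, p.1 ≠ [] ∧ p.2 ≠ [] ∧ (∀ x ∈ p.1, isAB x) ∧ (∀ x ∈ p.2, isAB x)

/-- A word over `{a, b}` that is nonempty. -/
def GoodWord (w : List Γ) : Prop := w ≠ [] ∧ ∀ x ∈ w, isAB x

/-- The PCP instance constructed from the normal system `S = (w, P)` and the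
target word `u`:
`W = {(d·ℓ_d(fw), dd), (dd, r_d(fu)·d), (da, ad), (db, bd)}
   ∪ {(ℓ_d(c^j f), r_d(f α_j)), (ℓ_d(β_j), r_d(c^j)) : j = 1, ..., t}`,
where the `j`-th rule (1-indexed) of `P` is `α_j X ↦ X β_j`. -/
def instW (P : List (List Γ × List Γ)) (w u : List Γ) :
    List (List Γ × List Γ) :=
  [(Γ.d :: ld (Γ.f :: w), [Γ.d, Γ.d]),
   ([Γ.d, Γ.d], rd (Γ.f :: u) ++ [Γ.d]),
   ([Γ.d, Γ.a], [Γ.a, Γ.d]),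
   ([Γ.d, Γ.b], [Γ.b, Γ.d])] ++
  ((List.range P.length).zip P).flatMap (fun jp =>
    [(ld (List.replicate (jp.1 + 1) Γ.c ++ [Γ.f]), rd (Γ.f :: jp.2.1)),
     (ld jp.2.2, rd (List.replicate (jp.1 + 1) Γ.c))])

/-- A PCP instance `W` has a solution: some nonempty sequence of pairs from
`W` has equal concatenations of first components and of second components. -/
def Solution (W : List (List Γ × List Γ)) : Prop :=
  ∃ s : List (List Γ × List Γ), s ≠ [] ∧ (∀ p ∈ s, p ∈ W) ∧
    (s.map Prod.fst).flatten = (s.map Prod.snd).flatten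


/-! Both sides are built from the same word `V`: writing `w = α₀x₀` and replacing each
`xⱼβⱼ` by `αⱼ₊₁xⱼ₊₁` turns `f w c^{i₀} f x₀β₀ ⋯` into `f α₀x₀c^{i₀} f α₁x₁c^{i₁} ⋯ f u`.
What remains is `d · ℓ_d(V) · dd = dd · r_d(V) · d`, which holds because
`ℓ_d(V) · d = d · r_d(V)`. -/

theorem d_cons_rd (v : List Γ) : Γ.d :: rd v = ld v ++ [Γ.d] := by
  induction v with
  | nil => rfl
  | cons y t ih =>
    simp only [ld, rd, List.flatMap_cons] at ih ⊢
    rw [List.cons_append, List.cons_append, List.append_assoc, ← ih]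
    rfl

theorem d_cons_ld_append_dd (v : List Γ) :
    Γ.d :: ld v ++ [Γ.d, Γ.d] = [Γ.d, Γ.d] ++ rd v ++ [Γ.d] := by
  calc Γ.d :: ld v ++ [Γ.d, Γ.d] = Γ.d :: (ld v ++ [Γ.d]) ++ [Γ.d] := by simp
    _ = [Γ.d, Γ.d] ++ rd v ++ [Γ.d] := by rw [← d_cons_rd]; rfl

theorem List.cons_append_flatMap_range_succ_telescope {A : Type*} (m : A) (p : ℕ → List A)
    (α β x : ℕ → List A) (n : ℕ)
    (hstep : ∀ j, j < n → x j ++ β j = α (j + 1) ++ x (j + 1)) :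
    m :: (α 0 ++ x 0) ++ (range (n + 1)).flatMap (fun j => p j ++ [m] ++ x j ++ β j)
      = (range (n + 1)).flatMap (fun j => m :: α j ++ x j ++ p j) ++ m :: (x n ++ β n) := by
  induction n with
  | zero => simp
  | succ n ih =>
    rw [range_succ, flatMap_append, flatMap_append, ← append_assoc,
      ih fun j hj => hstep j (by omega), hstep n (by omega)]
    simp

theorem solution_word_identity_general (k : ℕ) (hk : 1 ≤ k)
    (i : ℕ → ℕ)
    (α β x : ℕ → List Γ) (w u : List Γ)
    (h0 : w = α 0 ++ x 0)
    (hstep : ∀ j, j + 1 < k → x j ++ β j = α (j + 1) ++ x (j + 1))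
    (hlast : x (k - 1) ++ β (k - 1) = u) :
    Γ.d :: ld (Γ.f :: w ++ (List.range k).flatMap
        (fun j => List.replicate (i j) Γ.c ++ [Γ.f] ++ x j ++ β j))
      ++ [Γ.d, Γ.d]
    = [Γ.d, Γ.d] ++ rd ((List.range k).flatMap
        (fun j => Γ.f :: α j ++ x j ++ List.replicate (i j) Γ.c)
        ++ Γ.f :: u) ++ [Γ.d] := by
  obtain ⟨n, rfl⟩ : ∃ n, k = n + 1 := ⟨k - 1, by omega⟩
  rw [Nat.add_sub_cancel] at hlast
  rw [h0, ← hlast, List.cons_append_flatMap_range_succ_telescope Γ.f _ α β x n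
    fun j hj => hstep j (by omega)]
  exact d_cons_ld_append_dd _

theorem solution_word_identity (k : ℕ) (hk : 1 ≤ k)
    (i : ℕ → ℕ) (hi : ∀ j, j < k → 1 ≤ i j)
    (α β x : ℕ → List Γ) (w u : List Γ)
    (hα : ∀ j, j < k → GoodWord (α j)) (hβ : ∀ j, j < k → GoodWord (β j))
    (hx : ∀ j, j < k → ∀ y ∈ x j, isAB y)
    (hw : GoodWord w) (hu : GoodWord u)
    (h0 : w = α 0 ++ x 0)
    (hstep : ∀ j, j + 1 < k → x j ++ β j = α (j + 1) ++ x (j + 1))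
    (hlast : x (k - 1) ++ β (k - 1) = u) :
    Γ.d :: ld (Γ.f :: w ++ (List.range k).flatMap
        (fun j => List.replicate (i j) Γ.c ++ [Γ.f] ++ x j ++ β j))
      ++ [Γ.d, Γ.d]
    = [Γ.d, Γ.d] ++ rd ((List.range k).flatMap
        (fun j => Γ.f :: α j ++ x j ++ List.replicate (i j) Γ.c)
        ++ Γ.f :: u) ++ [Γ.d] :=
  solution_word_identity_general k hk i α β x w u h0 hstep hlast
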